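/- For the shifted gnu code with N = gn + 2g, shift Δ = g, and n odd, the operator X^{⊗N} acts as a logical bit-flip: X^{⊗N}|0_L⟩ = |1_L⟩ and X^{⊗N}|1_L⟩ = |0_L⟩. -/

import Mathlib

/-- Hamming weight of a bit string of length `N`. -/
def hamWeight {N : ℕ} (x : Fin N → Bool) : ℕ :=
  (Finset.univ.filter (fun i => x i = true)).card

/-- Unnormalized Dicke state `|H^N_w⟩`. -/
noncomputable def dickeH (N w : ℕ) : (Fin N → Bool) → ℂ :=
  fun x => if hamWeight x = w then 1 else 0

/-- Normalized Dicke state `|D^N_w⟩`. -/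
noncomputable def dickeD (N w : ℕ) : (Fin N → Bool) → ℂ :=
  fun x => ((Real.sqrt (N.choose w) : ℂ))⁻¹ * dickeH N w x

/-- The transversal bit-flip `X^{⊗N}` (basis permutation by bitwise complement). -/
def transversalX {N : ℕ} (ψ : (Fin N → Bool) → ℂ) : (Fin N → Bool) → ℂ :=
  fun x => ψ (fun i => !x i)

/-- Shifted gnu logical codeword `|0_L⟩` on `N = gn + 2g` qubits (shift `Δ = g`). -/
noncomputable def sgnuZero (g n : ℕ) : (Fin (g * n + 2 * g) → Bool) → ℂ :=
  ∑ j ∈ (Finset.range (n + 1)).filter (fun j => Even j),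
    ((Real.sqrt (2 ^ (n - 1 : ℤ) : ℝ)⁻¹ * Real.sqrt (n.choose j) : ℝ) : ℂ) •
      dickeD (g * n + 2 * g) (g * j + g)

/-- Shifted gnu logical codeword `|1_L⟩` on `N = gn + 2g` qubits (shift `Δ = g`). -/
noncomputable def sgnuOne (g n : ℕ) : (Fin (g * n + 2 * g) → Bool) → ℂ :=
  ∑ j ∈ (Finset.range (n + 1)).filter (fun j => Odd j),
    ((Real.sqrt (2 ^ (n - 1 : ℤ) : ℝ)⁻¹ * Real.sqrt (n.choose j) : ℝ) : ℂ) •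
      dickeD (g * n + 2 * g) (g * j + g)

/-! The bit-flip `x ↦ !x` maps Hamming weight `w` to `N - w`, so `X^{⊗N}` sends `|D^N_w⟩` to
`|D^N_{N-w}⟩`. With `N = gn + 2g` this sends the `j`-th term of the codewords to the `(n - j)`-th
one (the coefficients agree since `C(n, j) = C(n, n - j)`), and for odd `n` the reflection
`j ↦ n - j` exchanges even and odd `j`. -/

theorem hamWeight_le {N : ℕ} (x : Fin N → Bool) : hamWeight x ≤ N :=
  (Finset.card_filter_le _ _).trans (Finset.card_fin N).le

theorem hamWeight_not {N : ℕ} (x : Fin N → Bool) :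
    hamWeight (fun i => !x i) = N - hamWeight x := by
  have hcompl : Finset.univ.filter (fun i => (!x i) = true)
      = (Finset.univ.filter (fun i => x i = true))ᶜ := by
    ext i
    simp
  rw [hamWeight, hcompl, Finset.card_compl, Fintype.card_fin, hamWeight]

theorem transversalX_dickeD {N w : ℕ} (hw : w ≤ N) :
    transversalX (dickeD N w) = dickeD N (N - w) := by
  funext x
  have hle := hamWeight_le x
  simp only [transversalX, dickeD, dickeH, hamWeight_not, Nat.choose_symm hw]
  congr 1
  exact if_congr (by omega) rfl rfl

theorem transversalX_sum {N : ℕ} {ι : Type*} (s : Finset ι) (ψ : ι → (Fin N → Bool) → ℂ) :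
    transversalX (∑ i ∈ s, ψ i) = ∑ i ∈ s, transversalX (ψ i) := by
  funext x
  simp only [transversalX, Finset.sum_apply]

theorem transversalX_smul {N : ℕ} (c : ℂ) (ψ : (Fin N → Bool) → ℂ) :
    transversalX (c • ψ) = c • transversalX ψ :=
  rfl

theorem Finset.sum_filter_range_reflect {M : Type*} [AddCommMonoid M] (n : ℕ) (p : ℕ → Prop)
    [DecidablePred p] (f : ℕ → M) :
    ∑ j ∈ (range (n + 1)).filter p, f (n - j)
      = ∑ j ∈ (range (n + 1)).filter (fun j => p (n - j)), f j := by
  rw [sum_filter, sum_filter, ← sum_range_reflect _ (n + 1)]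
  refine sum_congr rfl fun j hj => ?_
  rw [Nat.add_sub_cancel, Nat.sub_sub_self (Nat.lt_succ_iff.mp (mem_range.mp hj))]

noncomputable def sgnuTerm (g n j : ℕ) : (Fin (g * n + 2 * g) → Bool) → ℂ :=
  ((Real.sqrt (2 ^ (n - 1 : ℤ) : ℝ)⁻¹ * Real.sqrt (n.choose j) : ℝ) : ℂ) •
    dickeD (g * n + 2 * g) (g * j + g)

theorem transversalX_sgnuTerm (g : ℕ) {n j : ℕ} (hj : j ≤ n) :
    transversalX (sgnuTerm g n j) = sgnuTerm g n (n - j) := by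
  have hweight : g * n + 2 * g - (g * j + g) = g * (n - j) + g := by
    rw [Nat.mul_sub]
    have := Nat.mul_le_mul_left g hj
    omega
  rw [sgnuTerm, transversalX_smul, transversalX_dickeD (by nlinarith), hweight,
    ← Nat.choose_symm hj, sgnuTerm]

theorem transversalX_sum_sgnuTerm (g n : ℕ) (p : ℕ → Prop) [DecidablePred p] :
    transversalX (∑ j ∈ (Finset.range (n + 1)).filter p, sgnuTerm g n j)
      = ∑ j ∈ (Finset.range (n + 1)).filter (fun j => p (n - j)), sgnuTerm g n j := by
  rw [transversalX_sum, ← Finset.sum_filter_range_reflect]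
  refine Finset.sum_congr rfl fun j hj => transversalX_sgnuTerm g ?_
  exact Nat.lt_succ_iff.mp (Finset.mem_range.mp (Finset.mem_filter.mp hj).1)

theorem transversalX_logical_bitflip_general (g n : ℕ) (hn : Odd n) :
    transversalX (sgnuZero g n) = sgnuOne g n ∧
    transversalX (sgnuOne g n) = sgnuZero g n := by
  have hle {j : ℕ} (hj : j ∈ Finset.range (n + 1)) : j ≤ n :=
    Nat.lt_succ_iff.mp (Finset.mem_range.mp hj)
  constructor
  · refine (transversalX_sum_sgnuTerm g n Even).trans (Finset.sum_congr ?_ fun _ _ => rfl)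
    exact Finset.filter_congr fun j hj => by simp [Nat.even_sub' (hle hj), hn]
  · refine (transversalX_sum_sgnuTerm g n Odd).trans (Finset.sum_congr ?_ fun _ _ => rfl)
    exact Finset.filter_congr fun j hj => by simp [Nat.odd_sub (hle hj), hn]

/-- for the shifted gnu code with `N = gn + 2g`, `Δ = g`, `n` odd,
`X^{⊗N}` acts as a logical bit-flip. -/
theorem transversalX_logical_bitflip (g n : ℕ) (hg : 0 < g) (hn : Odd n) :
    transversalX (sgnuZero g n) = sgnuOne g n ∧
    transversalX (sgnuOne g n) = sgnuZero g n :=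
  transversalX_logical_bitflip_general g n hn
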